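/- Let F be a closed subbifunctor of Ext^1 and let P• be a bounded-above complex of F-projective objects. If f• : X• → P• is an F-quasi-isomorphism of complexes, then there exists a chain map g• : P• → X• such that g•∘f• (composition P• → X• → P•) is homotopic to the identity of P•. -/

import Mathlib

open CategoryTheory CategoryTheory.Limits CategoryTheory.Category

universe w v u v' u'

namespace RelDer

variable {𝒜 : Type u} [Category.{v} 𝒜] [Abelian 𝒜]

/-- `g` is an `F`-epimorphism: it fits into an `F`-exact short exact sequence. -/
def FEpi (F : ShortComplex 𝒜 → Prop) {B C : 𝒜} (g : B ⟶ C) : Prop :=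
  ∃ (K : 𝒜) (k : K ⟶ B) (w : k ≫ g = 0), F (ShortComplex.mk k g w)

/-- `f` is an `F`-monomorphism. -/
def FMono (F : ShortComplex 𝒜 → Prop) {A B : 𝒜} (f : A ⟶ B) : Prop :=
  ∃ (C : 𝒜) (g : B ⟶ C) (w : f ≫ g = 0), F (ShortComplex.mk f g w)

/-- `P` is `F`-projective: `Hom(P,-)` sends `F`-exact sequences to exact sequences. -/
def FProjective (F : ShortComplex 𝒜 → Prop) (P : 𝒜) : Prop :=
  ∀ (S : ShortComplex 𝒜), F S → ∀ (p : P ⟶ S.X₃), ∃ q : P ⟶ S.X₂, q ≫ S.g = p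

/-- `I` is `F`-injective. -/
def FInjective (F : ShortComplex 𝒜 → Prop) (I : 𝒜) : Prop :=
  ∀ (S : ShortComplex 𝒜), F S → ∀ (p : S.X₁ ⟶ I), ∃ q : S.X₂ ⟶ I, S.f ≫ q = p

/-- `F` has enough projectives. -/
def HasEnoughFProjectives (F : ShortComplex 𝒜 → Prop) : Prop :=
  ∀ M : 𝒜, ∃ (P : 𝒜) (g : P ⟶ M), FProjective F P ∧ FEpi F g

/-- `F` has enough injectives. -/
def HasEnoughFInjectives (F : ShortComplex 𝒜 → Prop) : Prop :=
  ∀ M : 𝒜, ∃ (I : 𝒜) (f : M ⟶ I), FInjective F I ∧ FMono F f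

lemma image_ι_comp_d (X : CochainComplex 𝒜 ℤ) (i : ℤ) :
    image.ι (X.d (i-1) i) ≫ X.d i (i+1) = 0 := by
  rw [← cancel_epi (factorThruImage (X.d (i-1) i)), image.fac_assoc,
    HomologicalComplex.d_comp_d, comp_zero]

/-- The short complex `Im d^{i-1} → X^i → Im d^i` associated to a cochain complex. -/
noncomputable def imagesShortComplex (X : CochainComplex 𝒜 ℤ) (i : ℤ) : ShortComplex 𝒜 :=
  ShortComplex.mk (image.ι (X.d (i-1) i)) (factorThruImage (X.d i (i+1)))
    (by rw [← cancel_mono (image.ι (X.d i (i+1))), assoc, image.fac, zero_comp,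
      image_ι_comp_d])

/-- A complex is `F`-acyclic if each `0 → Im d^{i-1} → X^i → Im d^i → 0` is `F`-exact. -/
def FAcyclic (F : ShortComplex 𝒜 → Prop) (X : CochainComplex 𝒜 ℤ) : Prop :=
  ∀ i : ℤ, F (imagesShortComplex X i)

/-- A chain map is an `F`-quasi-isomorphism if its mapping cone is `F`-acyclic. -/
def FQuasiIso (F : ShortComplex 𝒜 → Prop) {X Y : CochainComplex 𝒜 ℤ} (f : X ⟶ Y) : Prop :=
  FAcyclic F (CochainComplex.mappingCone f)

def BoundedAbove (X : CochainComplex 𝒜 ℤ) : Prop :=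
  ∃ n : ℤ, ∀ i, n < i → IsZero (X.X i)

def Bounded (X : CochainComplex 𝒜 ℤ) : Prop :=
  ∃ a b : ℤ, ∀ i, (i < a ∨ b < i) → IsZero (X.X i)

/-- An equivalence of (pre)triangulated categories. -/
structure TriangleEquivalence (C : Type u) (D : Type u') [Category.{v} C] [Category.{v'} D]
    [HasShift C ℤ] [HasShift D ℤ] [Preadditive C] [Preadditive D]
    [HasZeroObject C] [HasZeroObject D]
    [∀ n : ℤ, (shiftFunctor C n).Additive] [∀ n : ℤ, (shiftFunctor D n).Additive]
    [Pretriangulated C] [Pretriangulated D] where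
  e : C ≌ D
  commShift : e.functor.CommShift ℤ
  isTriangulated : letI := commShift; e.functor.IsTriangulated

/-- Two maps are stably equal if their difference factors through an object satisfying `P`. -/
def stableHomRel (P : 𝒜 → Prop) : HomRel 𝒜 := fun {X Y} f g =>
  ∃ (Z : 𝒜) (_ : P Z) (a : X ⟶ Z) (b : Z ⟶ Y), f - g = a ≫ b

/-- The stable category of `𝒜` modulo objects satisfying `P`. -/
abbrev StableCategory (P : 𝒜 → Prop) := CategoryTheory.Quotient (stableHomRel P)

/-- The complex `Hom(P^•, Y)` of abelian groups, whose homology computes relative Ext. -/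
noncomputable def homComplex (P : CochainComplex 𝒜 ℤ) (Y : 𝒜) :
    HomologicalComplex AddCommGrpCat (ComplexShape.up ℤ).symm :=
  ((preadditiveYoneda.obj Y).mapHomologicalComplex (ComplexShape.up ℤ).symm).obj P.op

/-- The relative Ext group `Ext^i_F(X,Y)` computed from an `F`-projective resolution `P` of
`X` as the `i`-th cohomology of `Hom(P^•,Y)`. -/
noncomputable def extFGroup (P : CochainComplex 𝒜 ℤ) (Y : 𝒜) (i : ℤ) : AddCommGrpCat :=
  (homComplex P Y).homology (-i)

/-- `P`, together with the augmentation `ε`, is an `F`-projective resolution of `X`. -/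
def IsFProjResolution (F : ShortComplex 𝒜 → Prop) (X : 𝒜) (P : CochainComplex 𝒜 ℤ)
    (ε : P ⟶ (CochainComplex.singleFunctor 𝒜 0).obj X) : Prop :=
  (∀ i : ℤ, 0 < i → IsZero (P.X i)) ∧ (∀ i : ℤ, FProjective F (P.X i)) ∧ FQuasiIso F ε

/-- `X` has `F`-projective dimension at most `m`. -/
def FProjDimLe (F : ShortComplex 𝒜 → Prop) (X : 𝒜) (m : ℕ) : Prop :=
  ∃ (P : CochainComplex 𝒜 ℤ) (ε : P ⟶ (CochainComplex.singleFunctor 𝒜 0).obj X),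
    IsFProjResolution F X P ε ∧ ∀ i : ℤ, i < -(m : ℤ) → IsZero (P.X i)

/-- `I`, together with the augmentation `ε`, is an `F`-injective coresolution of `X`. -/
def IsFInjCoresolution (F : ShortComplex 𝒜 → Prop) (X : 𝒜) (I : CochainComplex 𝒜 ℤ)
    (ε : (CochainComplex.singleFunctor 𝒜 0).obj X ⟶ I) : Prop :=
  (∀ i : ℤ, i < 0 → IsZero (I.X i)) ∧ (∀ i : ℤ, FInjective F (I.X i)) ∧ FQuasiIso F ε

/-- `X` has `F`-injective dimension at most `m`. -/
def FInjDimLe (F : ShortComplex 𝒜 → Prop) (X : 𝒜) (m : ℕ) : Prop :=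
  ∃ (I : CochainComplex 𝒜 ℤ) (ε : (CochainComplex.singleFunctor 𝒜 0).obj X ⟶ I),
    IsFInjCoresolution F X I ε ∧ ∀ i : ℤ, (m : ℤ) < i → IsZero (I.X i)

/-- The `F`-projective dimension of `X`, valued in `ℕ∞`. -/
noncomputable def FProjDim (F : ShortComplex 𝒜 → Prop) (X : 𝒜) : ℕ∞ :=
  sInf {n : ℕ∞ | ∃ m : ℕ, n = m ∧ FProjDimLe F X m}

/-- The `F`-injective dimension of `X`, valued in `ℕ∞`. -/
noncomputable def FInjDim (F : ShortComplex 𝒜 → Prop) (X : 𝒜) : ℕ∞ :=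
  sInf {n : ℕ∞ | ∃ m : ℕ, n = m ∧ FInjDimLe F X m}

/-- The `F`-global dimension. -/
noncomputable def FGlobalDim (F : ShortComplex 𝒜 → Prop) : ℕ∞ :=
  ⨆ X : 𝒜, FProjDim F X

/-- The `F`-finitistic dimension. -/
noncomputable def FFinitisticDim (F : ShortComplex 𝒜 → Prop) : ℕ∞ :=
  ⨆ X : {X : 𝒜 // FProjDim F X ≠ ⊤}, FProjDim F X.1

/-- The class of all short exact sequences: the absolute (non-relative) exact structure. -/
def allExact : ShortComplex 𝒜 → Prop := fun S => S.ShortExact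

/-- `M` belongs to `add G`. -/
def InAdd (G M : 𝒜) : Prop :=
  haveI : HasFiniteBiproducts 𝒜 := Abelian.hasFiniteBiproducts
  ∃ (n : ℕ) (N : 𝒜), Nonempty ((M ⊞ N) ≅ (⨁ fun _ : Fin n => G))

namespace Triangulated

open Pretriangulated in
/-- The structure `Triangulated.Subcategory` of the older Mathlib (since removed), restated
with its old fields. -/
structure Subcategory (C : Type u') [Category.{v'} C] [HasZeroObject C] [HasShift C ℤ]
    [Preadditive C] [∀ n : ℤ, (shiftFunctor C n).Additive] [Pretriangulated C] where
  P : C → Prop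
  zero' : ∃ (Z : C) (_ : IsZero Z), P Z
  shift (X : C) (n : ℤ) : P X → P (X⟦n⟧)
  ext₂' (T : Triangle C) (_ : T ∈ distTriang C) : P T.obj₁ → P T.obj₃ →
    ∃ (Y : C) (_ : P Y), Nonempty (T.obj₂ ≅ Y)

end Triangulated

/-- `T` generates the objects satisfying `Gen` as a triangulated category
(closed under isomorphisms and retracts/direct summands). -/
def Generates {𝒯 : Type u'} [Category.{v'} 𝒯] [HasZeroObject 𝒯] [HasShift 𝒯 ℤ]
    [Preadditive 𝒯] [∀ n : ℤ, (shiftFunctor 𝒯 n).Additive] [Pretriangulated 𝒯]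
    (T : 𝒯) (Gen : 𝒯 → Prop) : Prop :=
  ∀ (S : Triangulated.Subcategory 𝒯),
    (∀ X Y : 𝒯, (X ≅ Y) → S.P X → S.P Y) →
    (∀ X Y : 𝒯, (∃ (r : X ⟶ Y) (s : Y ⟶ X), s ≫ r = 𝟙 Y) → S.P X → S.P Y) →
    S.P T → ∀ X : 𝒯, Gen X → S.P X

universe u₁ v₁ u₂ v₂ u₃ v₃

/-! A chain map `φ` from a bounded above complex of `F`-projectives to an `F`-acyclic complex `A`
is null-homotopic: going down from the top degree, the map `φ - d ∘ h` in degree `i` is a cycle,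
hence factors through `Im d^{i-1}`, and `F`-projectivity lifts it along the `F`-epimorphism
`A^{i-1} → Im d^{i-1}`. Since the mapping cone of `f` is `F`-acyclic, `inr : P → cone f` is
null-homotopic, and as `X → P → cone f → X[1]` is a distinguished triangle in the homotopy
category, `𝟙 P` factors through `f` up to homotopy. -/

section NullHomotopy

variable {F : ShortComplex 𝒜 → Prop} {A P : CochainComplex 𝒜 ℤ}

lemma exists_comp_d_eq_of_comp_d_eq_zero (hSE : ∀ S, F S → S.ShortExact) (hA : FAcyclic F A)
    {Q : 𝒜} (hQ : FProjective F Q) (j : ℤ) (ψ : Q ⟶ A.X j) (hψ : ψ ≫ A.d j (j + 1) = 0) :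
    ∃ q : Q ⟶ A.X (j - 1), q ≫ A.d (j - 1) j = ψ := by
  have hS := hSE _ (hA j)
  have := hS.mono_f
  have hψ' : ψ ≫ (imagesShortComplex A j).g = 0 := by
    change ψ ≫ factorThruImage (A.d j (j + 1)) = 0
    rwa [← cancel_mono (image.ι _), assoc, image.fac, zero_comp]
  have lift_factorThruImage : ∀ i k, i + 1 = k → ∀ p : Q ⟶ image (A.d i k),
      ∃ q, q ≫ factorThruImage (A.d i k) = p := by
    rintro i _ rfl p
    exact hQ _ (hA i) p
  obtain ⟨q, hq⟩ := lift_factorThruImage (j - 1) j (by omega) (hS.exact.lift ψ hψ')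
  exact ⟨q, by rw [← image.fac (A.d (j - 1) j), ← assoc, hq]; exact hS.exact.lift_f ψ hψ'⟩

def IsNullHomotopyAt (φ : P ⟶ A) (h : ∀ i j, P.X i ⟶ A.X j) (i : ℤ) : Prop :=
  φ.f i = P.d i (i + 1) ≫ h (i + 1) i + h i (i - 1) ≫ A.d (i - 1) i

lemma exists_extend_isNullHomotopyAt (hSE : ∀ S, F S → S.ShortExact) (hA : FAcyclic F A)
    (hProj : ∀ i, FProjective F (P.X i)) (φ : P ⟶ A) (i₀ : ℤ) (h : ∀ i j, P.X i ⟶ A.X j)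
    (hh : ∀ i, i₀ < i → IsNullHomotopyAt φ h i) :
    ∃ h' : ∀ i j, P.X i ⟶ A.X j,
      (∀ i, i₀ ≤ i → IsNullHomotopyAt φ h' i) ∧ ∀ i j, i ≠ i₀ → h' i j = h i j := by
  have hψ : ∀ i, i = i₀ →
      (φ.f i - P.d i (i + 1) ≫ h (i + 1) i) ≫ A.d i (i + 1) = 0 := by
    rintro i rfl
    have := hh (i + 1) (by omega)
    rw [IsNullHomotopyAt, show i + 1 - 1 = i by omega] at this
    rw [Preadditive.sub_comp, assoc, φ.comm, this]
    simp
  choose l hl using fun i (hi : i = i₀) =>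
    exists_comp_d_eq_of_comp_d_eq_zero hSE hA (hProj i) i _ (hψ i hi)
  refine ⟨fun i j => if hij : i = i₀ ∧ j = i - 1 then hij.2 ▸ l i hij.1 else h i j, ?_, ?_⟩
  · intro i hi
    rcases hi.lt_or_eq with hi | rfl
    · have := hh i hi
      simpa [IsNullHomotopyAt, hi.ne', show i + 1 ≠ i₀ by omega] using this
    · simp [IsNullHomotopyAt, hl]
  · intro i j hi
    simp [hi]

noncomputable def nullHomotopyStage (hSE : ∀ S, F S → S.ShortExact) (hA : FAcyclic F A)
    (hProj : ∀ i, FProjective F (P.X i)) (φ : P ⟶ A) (n : ℤ)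
    (hn : ∀ i, n < i → IsZero (P.X i)) :
    (k : ℕ) → {h : ∀ i j, P.X i ⟶ A.X j // ∀ i, n - k < i → IsNullHomotopyAt φ h i}
  | 0 => ⟨fun _ _ => 0, fun i hi => by
      simp [IsNullHomotopyAt, (hn i (by omega)).eq_of_src (φ.f i) 0]⟩
  | k + 1 =>
    let ext := exists_extend_isNullHomotopyAt hSE hA hProj φ (n - k) _
      (nullHomotopyStage hSE hA hProj φ n hn k).2
    ⟨ext.choose, fun i hi => ext.choose_spec.1 i (by omega)⟩

lemma nullHomotopyStage_succ_apply (hSE : ∀ S, F S → S.ShortExact) (hA : FAcyclic F A)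
    (hProj : ∀ i, FProjective F (P.X i)) (φ : P ⟶ A) (n : ℤ)
    (hn : ∀ i, n < i → IsZero (P.X i)) (k : ℕ) (i j : ℤ) (hi : i ≠ n - k) :
    (nullHomotopyStage hSE hA hProj φ n hn (k + 1)).1 i j =
      (nullHomotopyStage hSE hA hProj φ n hn k).1 i j :=
  (exists_extend_isNullHomotopyAt hSE hA hProj φ (n - k) _
    (nullHomotopyStage hSE hA hProj φ n hn k).2).choose_spec.2 i j hi

theorem nonempty_homotopy_zero_of_fAcyclic (hSE : ∀ S, F S → S.ShortExact) (hA : FAcyclic F A)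
    (hP : BoundedAbove P) (hProj : ∀ i, FProjective F (P.X i)) (φ : P ⟶ A) :
    Nonempty (Homotopy φ 0) := by
  obtain ⟨n, hn⟩ := hP
  let stage := nullHomotopyStage hSE hA hProj φ n hn
  -- stage `k + 1` only changes row `n - k`, so row `i` is final from stage `n + 1 - i` on
  let h i j := (stage (n + 1 - i).toNat).1 i j
  have hrel : ∀ i, IsNullHomotopyAt φ h i := by
    intro i
    have hrow : (stage (n + 1 - (i + 1)).toNat).1 (i + 1) i =
        (stage (n + 1 - i).toNat).1 (i + 1) i := by
      by_cases hi : i ≤ n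
      · obtain ⟨k, hk⟩ : ∃ k : ℕ, n - i = k := ⟨(n - i).toNat, by omega⟩
        rw [show (n + 1 - (i + 1)).toNat = k by omega, show (n + 1 - i).toNat = k + 1 by omega]
        exact (nullHomotopyStage_succ_apply hSE hA hProj φ n hn k _ _ (by omega)).symm
      · rw [show (n + 1 - (i + 1)).toNat = (n + 1 - i).toNat by omega]
    have := (stage (n + 1 - i).toNat).2 i (by omega)
    rwa [IsNullHomotopyAt, ← hrow] at this
  refine ⟨{ hom := fun i j => if j + 1 = i then h i j else 0
            zero := fun i j hij => if_neg hij
            comm := fun i => ?_ }⟩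
  rw [dNext_eq _ (show (ComplexShape.up ℤ).Rel i (i + 1) by simp),
    prevD_eq _ (show (ComplexShape.up ℤ).Rel (i - 1) i by simp)]
  simpa [IsNullHomotopyAt] using hrel i

end NullHomotopy

lemma exists_comp_homotopy_id_of_homotopy_inr_zero {C : Type*} [Category C] [Preadditive C]
    [HasZeroObject C] [HasBinaryBiproducts C] {X P : CochainComplex C ℤ} (f : X ⟶ P)
    (H : Homotopy (CochainComplex.mappingCone.inr f) 0) :
    ∃ g : P ⟶ X, Nonempty (Homotopy (g ≫ f) (𝟙 P)) := by
  let Q := HomotopyCategory.quotient C (ComplexShape.up ℤ)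
  obtain ⟨g, hg⟩ := Pretriangulated.Triangle.coyoneda_exact₂ _
    (HomotopyCategory.mappingCone_triangleh_distinguished f) (𝟙 _)
    (by rw [id_comp]; exact (HomotopyCategory.quotient_map_eq_zero_iff _).2 ⟨H⟩)
  obtain ⟨g, rfl⟩ : ∃ g' : P ⟶ X, Q.map g' = g := Q.map_surjective g
  exact ⟨g, ⟨HomotopyCategory.homotopyOfEq _ _ (by rw [Q.map_comp, Q.map_id]; exact hg.symm)⟩⟩

theorem statement6_general {𝒜 : Type u} [Category.{v} 𝒜] [Abelian 𝒜]
    (F : ShortComplex 𝒜 → Prop) (hSE : ∀ S, F S → S.ShortExact)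
    (P X : CochainComplex 𝒜 ℤ) (hP : BoundedAbove P)
    (hProj : ∀ i : ℤ, FProjective F (P.X i))
    (f : X ⟶ P) (hf : FQuasiIso F f) :
    ∃ g : P ⟶ X, Nonempty (Homotopy (g ≫ f) (𝟙 P)) :=
  let ⟨H⟩ := nonempty_homotopy_zero_of_fAcyclic hSE hf hP hProj (CochainComplex.mappingCone.inr f)
  exists_comp_homotopy_id_of_homotopy_inr_zero f H

/-- If `P^•` is a bounded above complex of `F`-projectives and `f : X^• → P^•` is an
`F`-quasi-isomorphism, then there is `g : P^• → X^•` with `g ∘ f ≃ id`. -/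
theorem statement6 {𝒜 : Type u} [Category.{v} 𝒜] [Abelian 𝒜]
    (F : ShortComplex 𝒜 → Prop) (hSE : ∀ S, F S → S.ShortExact)
    -- `F` is closed: `F`-acyclic complexes are stable under mapping cones
    (hclosed : ∀ (U V : CochainComplex 𝒜 ℤ) (u : U ⟶ V), FAcyclic F U → FAcyclic F V →
      FAcyclic F (CochainComplex.mappingCone u))
    (P X : CochainComplex 𝒜 ℤ) (hP : BoundedAbove P)
    (hProj : ∀ i : ℤ, FProjective F (P.X i))
    (f : X ⟶ P) (hf : FQuasiIso F f) :
    ∃ g : P ⟶ X, Nonempty (Homotopy (g ≫ f) (𝟙 P)) :=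
  statement6_general F hSE P X hP hProj f hf

end RelDer
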